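/- arXiv:1503.02353 — 4 statements merged into one kernel-verified Lean document; each statement's English description precedes it below -/
import Mathlib

section
/- Let n ≥ 2 and 2 ≤ k ≤ n be integers, and let y ≥ 11·k·ln n be a positive integer. Let X be the sum of y independent Bernoulli random variables, each with success probability 1/(k−1). Then P(X ≥ 7y/(4(k−1))) ≤ 1/n². -/
open MeasureTheory ProbabilityTheory
open scoped ENNReal

private lemma bern_integral {Ω : Type*} [MeasureSpace Ω] [IsProbabilityMeasure (ℙ : Measure Ω)]
    (f : Ω → ℝ) (hf : Measurable f) (h01 : ∀ ω, f ω = 0 ∨ f ω = 1)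
    (p : ℝ) (hp : ℙ {ω | f ω = 1} = ENNReal.ofReal p) (hp0 : 0 ≤ p) :
    ∫ ω, f ω = p := by
  have h : f = Set.indicator (f ⁻¹' {1}) (fun _ => (1:ℝ)) := by
    ext ω
    rcases h01 ω with h | h <;> simp [Set.indicator_apply, h]
  rw [h, integral_indicator_const _ (hf (measurableSet_singleton 1))]
  have h2 : f ⁻¹' {1} = {ω | f ω = 1} := rfl
  rw [h2, measureReal_def, hp, ENNReal.toReal_ofReal hp0]
  simp

private lemma bern_int {Ω : Type*} [MeasureSpace Ω] [IsProbabilityMeasure (ℙ : Measure Ω)]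
    (f : Ω → ℝ) (hf : Measurable f) (h01 : ∀ ω, f ω = 0 ∨ f ω = 1) :
    Integrable f ℙ := by
  refine (integrable_const (1:ℝ)).mono' hf.aestronglyMeasurable ?_
  filter_upwards with ω
  rcases h01 ω with h | h <;> simp [h]

private lemma bern_mgf {Ω : Type*} [MeasureSpace Ω] [IsProbabilityMeasure (ℙ : Measure Ω)]
    (f : Ω → ℝ) (hf : Measurable f) (h01 : ∀ ω, f ω = 0 ∨ f ω = 1)
    (p : ℝ) (hp : ℙ {ω | f ω = 1} = ENNReal.ofReal p) (hp0 : 0 ≤ p) (s : ℝ) :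
    mgf f ℙ s = 1 + (Real.exp s - 1) * p := by
  have key : (fun ω => Real.exp (s * f ω)) = fun ω => 1 + (Real.exp s - 1) * f ω := by
    ext ω
    rcases h01 ω with h | h <;> simp [h]
  rw [mgf, key]
  rw [integral_add (integrable_const _) ((bern_int f hf h01).const_mul _),
    integral_const, integral_const_mul, bern_integral f hf h01 p hp hp0]
  simp

/-- If `n ≥ 2`, `2 ≤ k ≤ n`, and `y ≥ 11·k·ln n`, then the sum `X` of `y`
independent Bernoulli random variables with success probability `1/(k−1)`
satisfies `P(X ≥ 7y/(4(k−1))) ≤ 1/n²`. -/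
theorem proxy_link_load_high
    {Ω : Type*} [MeasureSpace Ω] [IsProbabilityMeasure (ℙ : Measure Ω)]
    (n k y : ℕ) (hn : 2 ≤ n) (hk2 : 2 ≤ k) (hkn : k ≤ n)
    (hy0 : 0 < y) (hy : (11 : ℝ) * k * Real.log n ≤ y)
    (X : Fin y → Ω → ℝ)
    (hmeas : ∀ i, Measurable (X i))
    (h01 : ∀ i ω, X i ω = 0 ∨ X i ω = 1)
    (hind : iIndepFun X ℙ)
    (hBer : ∀ i, ℙ {ω | X i ω = 1} = ENNReal.ofReal (1 / (k - 1 : ℝ))) :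
    ℙ {ω | (7 * y : ℝ) / (4 * (k - 1 : ℝ)) ≤ ∑ i, X i ω} ≤
      1 / (n : ℝ≥0∞) ^ 2 := by
  set p : ℝ := 1 / (k - 1 : ℝ) with hpdef
  have hk1 : (1 : ℝ) ≤ (k : ℝ) - 1 := by
    have : (2 : ℝ) ≤ k := by exact_mod_cast hk2
    linarith
  have hp0 : 0 ≤ p := by positivity
  set s : ℝ := Real.log 2 with hsdef
  have hs0 : 0 ≤ s := Real.log_nonneg (by norm_num)
  have hes : Real.exp s = 2 := Real.exp_log (by norm_num)
  set S : Ω → ℝ := ∑ i, X i with hSdef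
  have hSapp : ∀ ω, S ω = ∑ i, X i ω := by
    intro ω; simp [hSdef]
  have hmeasS : Measurable S := by
    have h : S = fun ω => ∑ i, X i ω := funext hSapp
    rw [h]
    exact Finset.measurable_sum _ fun i _ => (hmeas i).comp measurable_id
  -- integrability of exp (s * S)
  have hintS : Integrable (fun ω => Real.exp (s * S ω)) ℙ := by
    refine (integrable_const (Real.exp (s * y))).mono'
      ((hmeasS.const_mul s).exp).aestronglyMeasurable ?_
    filter_upwards with ω
    rw [Real.norm_eq_abs, abs_of_pos (Real.exp_pos _), Real.exp_le_exp]
    have hb : S ω ≤ y := by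
      rw [hSapp]
      calc ∑ i, X i ω ≤ ∑ _i : Fin y, (1:ℝ) := by
            apply Finset.sum_le_sum
            intro i _
            rcases h01 i ω with h | h <;> simp [h]
        _ = y := by simp
    exact mul_le_mul_of_nonneg_left hb hs0
  -- Chernoff
  have hset : {ω | (7 * y : ℝ) / (4 * (k - 1 : ℝ)) ≤ ∑ i, X i ω}
      = {ω | (7 * y : ℝ) / (4 * (k - 1 : ℝ)) ≤ S ω} := by
    ext ω; simp [hSapp]
  set ε : ℝ := (7 * y : ℝ) / (4 * (k - 1 : ℝ)) with hεdef
  have hcher := measure_ge_le_exp_mul_mgf (X := S) (μ := ℙ) (t := s) ε hs0 hintS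
  -- mgf bound
  have hmgf : mgf S ℙ s = (1 + p) ^ y := by
    rw [hSdef, hind.mgf_sum hmeas]
    have : ∀ i : Fin y, mgf (X i) ℙ s = 1 + p := by
      intro i
      rw [bern_mgf (X i) (hmeas i) (h01 i) p (hBer i) hp0, hes]
      ring
    simp [this]
  have hmgf_le : mgf S ℙ s ≤ Real.exp (y * p) := by
    rw [hmgf]
    calc (1 + p) ^ y ≤ (Real.exp p) ^ y := by
          apply pow_le_pow_left₀ (by linarith)
          linarith [Real.add_one_le_exp p]
      _ = Real.exp (y * p) := by rw [← Real.exp_nat_mul]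
  -- numeric bound on the exponent
  have hlogn : 0 ≤ Real.log n := Real.log_nonneg (by exact_mod_cast Nat.one_le_of_lt hn)
  have hyp : 11 * Real.log n ≤ y * p := by
    have hk1' : (0:ℝ) < (k:ℝ) - 1 := by linarith
    have h2 : (11:ℝ) * ((k:ℝ) - 1) * Real.log n ≤ y := by nlinarith
    rw [hpdef, mul_one_div, le_div_iff₀ hk1']
    linarith
  have hεp : ε = (7/4) * (y * p) := by
    rw [hεdef, hpdef]; field_simp
  have hexp_le : Real.exp (-s * ε) * mgf S ℙ s ≤ Real.exp (-(2 * Real.log n)) := by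
    calc Real.exp (-s * ε) * mgf S ℙ s ≤ Real.exp (-s * ε) * Real.exp (y * p) := by
          apply mul_le_mul_of_nonneg_left hmgf_le (Real.exp_pos _).le
      _ = Real.exp (y * p - s * ε) := by rw [← Real.exp_add]; ring_nf
      _ ≤ Real.exp (-(2 * Real.log n)) := by
          rw [Real.exp_le_exp, hεp]
          have hln2 : (0.6931471803 : ℝ) < s := Real.log_two_gt_d9
          nlinarith [hyp, hlogn]
  -- conclude
  rw [hset]
  have htop : ℙ {ω | ε ≤ S ω} ≠ ⊤ := measure_ne_top _ _
  calc ℙ {ω | ε ≤ S ω} = ENNReal.ofReal (ℙ {ω | ε ≤ S ω}).toReal :=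
        (ENNReal.ofReal_toReal htop).symm
    _ ≤ ENNReal.ofReal (Real.exp (-(2 * Real.log n))) :=
        ENNReal.ofReal_le_ofReal (le_trans hcher hexp_le)
    _ = 1 / (n : ℝ≥0∞) ^ 2 := by
        have hn0 : (0:ℝ) < (n:ℝ) := by positivity
        have : Real.exp (-(2 * Real.log n)) = 1 / (n:ℝ)^2 := by
          rw [Real.exp_neg, show (2:ℝ) * Real.log n = Real.log n + Real.log n by ring,
            Real.exp_add, Real.exp_log hn0, one_div, sq]
        rw [this, ENNReal.ofReal_div_of_pos (by positivity), ENNReal.ofReal_one,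
          ENNReal.ofReal_pow hn0.le, ENNReal.ofReal_natCast]
end

section
/- Let X_1, …, X_n be independent random variables on a probability space, each taking values in {0,1}, such that P(X_i = 1) ≤ 1/(i+1) for every 1 ≤ i ≤ n, and let X = Σ_{i=1}^n X_i. Then P(X ≥ 6·log₂(n+1)) ≤ 1/(n+1)^6. -/
open MeasureTheory ProbabilityTheory
open scoped ENNReal

/-- Expectation of a finite product of independent `ℝ≥0∞`-valued random variables. -/
lemma drr_lintegral_finset_prod_of_iIndep {ι Ω : Type*} [MeasurableSpace Ω]
    {μ : Measure Ω} [IsProbabilityMeasure μ]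
    (g : ι → Ω → ℝ≥0∞) (hmeas : ∀ i, Measurable (g i))
    (hind : iIndepFun g μ) (s : Finset ι) :
    ∫⁻ ω, ∏ i ∈ s, g i ω ∂μ = ∏ i ∈ s, ∫⁻ ω, g i ω ∂μ := by
  classical
  induction s using Finset.cons_induction with
  | empty => simp
  | cons a s ha ih =>
    simp only [Finset.prod_cons]
    rw [← ih]
    have hsm : Measurable (fun ω => ∏ i ∈ s, g i ω) :=
      Finset.measurable_prod _ (fun i _ => hmeas i)
    have hI : IndepFun (g a) (∏ j ∈ s, g j) μ :=
      (hind.indepFun_finset_prod_of_notMem hmeas ha).symm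
    have hI' : IndepFun (g a) (fun ω => ∏ i ∈ s, g i ω) μ := by
      convert hI using 1
      ext ω
      simp [Finset.prod_apply]
    have := lintegral_mul_eq_lintegral_mul_lintegral_of_indepFun
      (hmeas a) hsm hI'
    simpa [Pi.mul_apply] using this

/-- Telescoping product. -/
lemma drr_prod_ratio (n : ℕ) :
    ∏ i ∈ Finset.Icc 1 n, (((i : ℝ) + 4) / ((i : ℝ) + 1)) =
      ((n : ℝ) + 2) * ((n : ℝ) + 3) * ((n : ℝ) + 4) / 24 := by
  induction n with
  | zero => simp; norm_num
  | succ n ih =>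
    rw [Finset.prod_Icc_succ_top (by omega), ih]
    have h1 : ((n : ℝ) + 1) + 1 ≠ 0 := by positivity
    push_cast
    field_simp
    ring

/-- If `X₁, …, X_n` are independent `{0,1}`-valued random variables with
`P(Xᵢ = 1) ≤ 1/(i+1)` for every `1 ≤ i ≤ n`, and `X = ∑_{i=1}^n Xᵢ`, then
`P(X ≥ 6·log₂(n+1)) ≤ 1/(n+1)⁶`. -/
theorem drr_tree_depth_bound
    {Ω : Type*} [MeasureSpace Ω] [IsProbabilityMeasure (ℙ : Measure Ω)]
    (n : ℕ) (X : ℕ → Ω → ℝ)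
    (hmeas : ∀ i ∈ Finset.Icc 1 n, Measurable (X i))
    (h01 : ∀ i ∈ Finset.Icc 1 n, ∀ ω, X i ω = 0 ∨ X i ω = 1)
    (hind : iIndepFun (fun i : Fin n => X ((i : ℕ) + 1)) ℙ)
    (hprob : ∀ i ∈ Finset.Icc 1 n,
      (ℙ : Measure Ω) {ω | X i ω = 1} ≤ ENNReal.ofReal (1 / (i + 1 : ℝ))) :
    (ℙ : Measure Ω) {ω | 6 * Real.logb 2 (n + 1) ≤ ∑ i ∈ Finset.Icc 1 n, X i ω} ≤
      1 / ((n : ℝ≥0∞) + 1) ^ 6 := by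
  classical
  set t : ℝ := 6 * Real.logb 2 (n + 1) with ht
  set F : Ω → ℝ≥0∞ := fun ω => ∏ i ∈ Finset.Icc 1 n, ENNReal.ofReal (3 * X i ω + 1) with hF
  have hmem : ∀ i ∈ Finset.Icc 1 n, ∀ ω, 0 ≤ 3 * X i ω + 1 := by
    intro i hi ω
    rcases h01 i hi ω with h | h <;> rw [h] <;> norm_num
  have hFmeas : Measurable F := by
    apply Finset.measurable_prod
    intro i hi
    exact ((hmeas i hi).const_mul 3).add_const 1 |>.ennreal_ofReal
  have hnpos : (0:ℝ) < (n : ℝ) + 1 := by positivity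
  -- value of 4 ^ t
  have h4t : (4:ℝ) ^ t = ((n:ℝ) + 1) ^ (12:ℕ) := by
    have h2 : (4:ℝ) = (2:ℝ) ^ (2:ℝ) := by
      rw [show (2:ℝ) ^ (2:ℝ) = (2:ℝ) ^ ((2:ℕ):ℝ) by norm_num, Real.rpow_natCast]; norm_num
    rw [h2, ← Real.rpow_mul (by norm_num : (0:ℝ) ≤ 2),
      show (2:ℝ) * t = Real.logb 2 ((n:ℝ)+1) * 12 by rw [ht]; ring,
      Real.rpow_mul (by norm_num : (0:ℝ) ≤ 2),
      Real.rpow_logb (by norm_num) (by norm_num) hnpos,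
      show (12:ℝ) = ((12:ℕ):ℝ) by norm_num, Real.rpow_natCast]
  -- pointwise: on the event, F ω ≥ ofReal (4 ^ t)
  have hpt : ∀ ω, t ≤ ∑ i ∈ Finset.Icc 1 n, X i ω →
      ENNReal.ofReal ((4:ℝ) ^ t) ≤ F ω := by
    intro ω hω
    have hprodeq : F ω = ENNReal.ofReal ((4:ℝ) ^ (∑ i ∈ Finset.Icc 1 n, X i ω)) := by
      rw [hF]
      rw [Real.rpow_sum_of_pos (by norm_num : (0:ℝ) < 4)]
      rw [ENNReal.ofReal_prod_of_nonneg (fun i hi => (Real.rpow_pos_of_pos (by norm_num) _).le)]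
      refine Finset.prod_congr rfl fun i hi => ?_
      rcases h01 i hi ω with h | h <;> rw [h] <;> norm_num
    rw [hprodeq]
    exact ENNReal.ofReal_le_ofReal
      (Real.rpow_le_rpow_left_iff (by norm_num : (1:ℝ) < 4) |>.mpr hω)
  -- Markov
  have hmarkov : ENNReal.ofReal ((4:ℝ) ^ t) *
      (ℙ : Measure Ω) {ω | t ≤ ∑ i ∈ Finset.Icc 1 n, X i ω} ≤ ∫⁻ ω, F ω := by
    calc ENNReal.ofReal ((4:ℝ) ^ t) *
        (ℙ : Measure Ω) {ω | t ≤ ∑ i ∈ Finset.Icc 1 n, X i ω}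
        ≤ ENNReal.ofReal ((4:ℝ) ^ t) *
          (ℙ : Measure Ω) {ω | ENNReal.ofReal ((4:ℝ) ^ t) ≤ F ω} := by
          have hsub : {ω | t ≤ ∑ i ∈ Finset.Icc 1 n, X i ω} ⊆
              {ω | ENNReal.ofReal ((4:ℝ) ^ t) ≤ F ω} := fun ω hω => hpt ω hω
          exact mul_le_mul_right (measure_mono hsub) _
      _ ≤ ∫⁻ ω, F ω := mul_meas_ge_le_lintegral hFmeas _
  -- independence gives product of expectations
  have hprodint : ∫⁻ ω, F ω = ∏ i ∈ Finset.Icc 1 n,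
      ∫⁻ ω, ENNReal.ofReal (3 * X i ω + 1) := by
    have hreindex : ∀ (f : ℕ → ℝ≥0∞), ∏ i ∈ Finset.Icc 1 n, f i =
        ∏ i : Fin n, f ((i : ℕ) + 1) := by
      intro f
      rw [Fin.prod_univ_eq_prod_range (fun i => f (i + 1)) n,
        show Finset.Icc 1 n = Finset.Ico 1 (n+1) from (Finset.Ico_add_one_right_eq_Icc 1 n).symm,
        Finset.prod_Ico_eq_prod_range]
      simp [add_comm]
    have hmeas' : ∀ i : Fin n, Measurable
        (fun ω => ENNReal.ofReal (3 * X ((i:ℕ)+1) ω + 1)) := by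
      intro i
      have hi : (i:ℕ)+1 ∈ Finset.Icc 1 n := by
        simp only [Finset.mem_Icc]
        omega
      exact ((hmeas _ hi).const_mul 3).add_const 1 |>.ennreal_ofReal
    have hind' : iIndepFun
        (fun i : Fin n => fun ω => ENNReal.ofReal (3 * X ((i:ℕ)+1) ω + 1)) ℙ :=
      hind.comp (fun _ => fun x : ℝ => ENNReal.ofReal (3 * x + 1))
        (fun _ => ((measurable_id.const_mul 3).add_const 1).ennreal_ofReal)
    have := drr_lintegral_finset_prod_of_iIndep
      (fun i : Fin n => fun ω => ENNReal.ofReal (3 * X ((i:ℕ)+1) ω + 1))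
      hmeas' hind' Finset.univ
    calc ∫⁻ ω, F ω
        = ∫⁻ ω, ∏ i : Fin n, ENNReal.ofReal (3 * X ((i:ℕ)+1) ω + 1) := by
          refine lintegral_congr fun ω => ?_
          exact hreindex (fun i => ENNReal.ofReal (3 * X i ω + 1))
      _ = ∏ i : Fin n, ∫⁻ ω, ENNReal.ofReal (3 * X ((i:ℕ)+1) ω + 1) := this
      _ = ∏ i ∈ Finset.Icc 1 n, ∫⁻ ω, ENNReal.ofReal (3 * X i ω + 1) :=
          (hreindex (fun i => ∫⁻ ω, ENNReal.ofReal (3 * X i ω + 1))).symm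
  -- bound each factor
  have hfac : ∀ i ∈ Finset.Icc 1 n, ∫⁻ ω, ENNReal.ofReal (3 * X i ω + 1) ≤
      ENNReal.ofReal (((i:ℝ) + 4) / ((i:ℝ) + 1)) := by
    intro i hi
    have hset : MeasurableSet {ω | X i ω = 1} :=
      (hmeas i hi) (measurableSet_singleton 1)
    have heq : (fun ω => ENNReal.ofReal (3 * X i ω + 1)) =
        fun ω => Set.indicator {ω | X i ω = 1} (fun _ => (3:ℝ≥0∞)) ω + 1 := by
      funext ω
      rcases h01 i hi ω with h | h
      · have : ω ∉ {ω | X i ω = 1} := by simp [h]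
        rw [Set.indicator_of_notMem this, h]
        norm_num
      · have : ω ∈ {ω | X i ω = 1} := by simp [h]
        rw [Set.indicator_of_mem this, h]
        rw [show (3:ℝ)*1+1 = 4 by norm_num]
        rw [show (4:ℝ) = ((4:ℕ):ℝ) by norm_num, ENNReal.ofReal_natCast]
        norm_num
    rw [heq, lintegral_add_right _ measurable_const, lintegral_indicator hset _]
    simp only [lintegral_const, measure_univ, mul_one, one_mul, setLIntegral_const,
      Measure.restrict_apply_univ]
    have hle : (3:ℝ≥0∞) * (ℙ : Measure Ω) {ω | X i ω = 1} + 1 ≤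
        3 * ENNReal.ofReal (1 / ((i:ℝ) + 1)) + 1 := by
      gcongr
      exact hprob i hi
    refine le_trans hle ?_
    have hipos : (0:ℝ) < (i:ℝ) + 1 := by positivity
    rw [show (3:ℝ≥0∞) = ENNReal.ofReal 3 by norm_num,
      ← ENNReal.ofReal_mul (by norm_num), show (1:ℝ≥0∞) = ENNReal.ofReal 1 by norm_num,
      ← ENNReal.ofReal_add (by positivity) (by norm_num)]
    apply ENNReal.ofReal_le_ofReal
    have heq2 : 3 * (1 / ((i:ℝ) + 1)) + 1 = ((i:ℝ) + 4) / ((i:ℝ) + 1) := by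
      field_simp
      ring
    rw [heq2]
  -- total bound on the expectation
  have hE : ∫⁻ ω, F ω ≤ ENNReal.ofReal (((n:ℝ) + 1) ^ 3) := by
    rw [hprodint]
    calc ∏ i ∈ Finset.Icc 1 n, ∫⁻ ω, ENNReal.ofReal (3 * X i ω + 1)
        ≤ ∏ i ∈ Finset.Icc 1 n, ENNReal.ofReal (((i:ℝ) + 4) / ((i:ℝ) + 1)) :=
          Finset.prod_le_prod' hfac
      _ = ENNReal.ofReal (∏ i ∈ Finset.Icc 1 n, (((i:ℝ) + 4) / ((i:ℝ) + 1))) :=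
          (ENNReal.ofReal_prod_of_nonneg (fun i hi => by positivity)).symm
      _ ≤ ENNReal.ofReal (((n:ℝ) + 1) ^ 3) := by
          apply ENNReal.ofReal_le_ofReal
          rw [drr_prod_ratio n, div_le_iff₀ (by norm_num : (0:ℝ) < 24)]
          nlinarith [Nat.cast_nonneg (α := ℝ) n, pow_nonneg (Nat.cast_nonneg (α := ℝ) n) 3,
            sq_nonneg ((n:ℝ))]
  -- convert powers to ℝ≥0∞
  set N : ℝ≥0∞ := (n : ℝ≥0∞) + 1 with hN
  have hN3 : ENNReal.ofReal (((n:ℝ) + 1) ^ 3) = N ^ 3 := by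
    rw [ENNReal.ofReal_pow hnpos.le, hN]
    congr 1
    rw [show ((n:ℝ) + 1) = ((n+1 : ℕ) : ℝ) by push_cast; ring, ENNReal.ofReal_natCast]
    push_cast; ring
  have hN12 : ENNReal.ofReal ((4:ℝ) ^ t) = N ^ 12 := by
    rw [h4t, ENNReal.ofReal_pow hnpos.le, hN]
    congr 1
    rw [show ((n:ℝ) + 1) = ((n+1 : ℕ) : ℝ) by push_cast; ring, ENNReal.ofReal_natCast]
    push_cast; ring
  have hNone : (1:ℝ≥0∞) ≤ N := by rw [hN]; exact le_add_self
  have hNne : N ≠ 0 := by rw [hN]; positivity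
  have hNtop : N ≠ ⊤ := by rw [hN]; simp [ENNReal.add_ne_top]
  have hkey : N ^ 12 * (ℙ : Measure Ω) {ω | t ≤ ∑ i ∈ Finset.Icc 1 n, X i ω} ≤ N ^ 3 := by
    rw [← hN12, ← hN3]
    exact hmarkov.trans hE
  have h1 : (ℙ : Measure Ω) {ω | t ≤ ∑ i ∈ Finset.Icc 1 n, X i ω} ≤ N ^ 3 / N ^ 12 := by
    rw [ENNReal.le_div_iff_mul_le (Or.inl (pow_ne_zero _ hNne))
      (Or.inl (ENNReal.pow_ne_top hNtop))]
    rw [mul_comm]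
    exact hkey
  refine h1.trans ?_
  have e : N ^ 6 * 1 / (N ^ 6 * N ^ 6) = 1 / N ^ 6 :=
    ENNReal.mul_div_mul_left 1 (N ^ 6) (pow_ne_zero _ hNne) (ENNReal.pow_ne_top hNtop)
  rw [mul_one, ← pow_add] at e
  norm_num at e
  calc N ^ 3 / N ^ 12 ≤ N ^ 6 / N ^ 12 :=
        ENNReal.div_le_div_right (pow_le_pow_right₀ hNone (by norm_num)) _
    _ = 1 / N ^ 6 := by rw [e, one_div]
end

section
/- Let n ≥ 2 be an integer and let m ≥ 12·ln n be a positive integer. Let X_1, …, X_m be independent random variables taking values in {0,1} with P(X_i = 1) ≥ 1/3 for every i, and let X = Σ_{i=1}^m X_i. Then P(X ≤ ln n) ≤ n^{−9/8}; in particular P(X ≤ ln n) < 1/n. -/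
open MeasureTheory ProbabilityTheory
open scoped ENNReal

/-- If `n ≥ 2`, `m ≥ 12·ln n`, and `X₁, …, X_m` are independent `{0,1}`-valued
random variables with `P(Xᵢ = 1) ≥ 1/3`, then `X = ∑ Xᵢ` satisfies
`P(X ≤ ln n) ≤ n^{−9/8}`; in particular `P(X ≤ ln n) < 1/n`. -/
theorem successful_phases_bound
    {Ω : Type*} [MeasureSpace Ω] [IsProbabilityMeasure (ℙ : Measure Ω)]
    (n m : ℕ) (hn : 2 ≤ n) (hm0 : 0 < m) (hm : (12 : ℝ) * Real.log n ≤ m)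
    (X : Fin m → Ω → ℝ)
    (hmeas : ∀ i, Measurable (X i))
    (h01 : ∀ i ω, X i ω = 0 ∨ X i ω = 1)
    (hind : iIndepFun X ℙ)
    (hprob : ∀ i, ENNReal.ofReal (1 / 3) ≤ ℙ {ω | X i ω = 1}) :
    ℙ {ω | ∑ i, X i ω ≤ Real.log n} ≤ ENNReal.ofReal ((n : ℝ) ^ (-(9 : ℝ) / 8)) ∧
    ℙ {ω | ∑ i, X i ω ≤ Real.log n} < 1 / (n : ℝ≥0∞) := by
  have hn1 : (1 : ℝ) ≤ (n : ℝ) := by exact_mod_cast Nat.one_le_of_lt hn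
  have hn2 : (2 : ℝ) ≤ (n : ℝ) := by exact_mod_cast hn
  set a := Real.log n with ha
  have ha0 : 0 ≤ a := Real.log_nonneg hn1
  set t : ℝ := -Real.log 4 with htdef
  have ht : t ≤ 0 := neg_nonpos.mpr (Real.log_nonneg (by norm_num))
  have het : Real.exp t = 1 / 4 := by
    rw [htdef, Real.exp_neg, Real.exp_log (by norm_num)]; norm_num
  set A : Fin m → Set Ω := fun i => {ω | X i ω = 1} with hA
  have hms : ∀ i, MeasurableSet (A i) := fun i => (hmeas i) (measurableSet_singleton 1)
  have hXind : ∀ i ω, X i ω = (A i).indicator (fun _ => (1 : ℝ)) ω := by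
    intro i ω
    rcases h01 i ω with h | h <;> simp [Set.indicator, hA, h]
  have hXint : ∀ i, Integrable (X i) ℙ := by
    intro i
    exact ((integrable_const (1 : ℝ)).indicator (hms i)).congr
      (Filter.Eventually.of_forall fun ω => (hXind i ω).symm)
  have hEX : ∀ i, ∫ ω, X i ω ∂ℙ = (ℙ (A i)).toReal := by
    intro i
    rw [integral_congr_ae (Filter.Eventually.of_forall (hXind i))]
    rw [integral_indicator_const (1 : ℝ) (hms i)]
    simp; rfl
  have hptwise : ∀ i ω, Real.exp (t * X i ω) = 1 + (Real.exp t - 1) * X i ω := by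
    intro i ω
    rcases h01 i ω with h | h <;> simp [h]
  have hintexp : ∀ i, Integrable (fun ω => Real.exp (t * X i ω)) ℙ := by
    intro i
    exact ((integrable_const (1 : ℝ)).add ((hXint i).const_mul _)).congr
      (Filter.Eventually.of_forall fun ω => (hptwise i ω).symm)
  have hmgf : ∀ i, mgf (X i) ℙ t = 1 + (Real.exp t - 1) * (ℙ (A i)).toReal := by
    intro i
    rw [mgf]
    rw [integral_congr_ae (Filter.Eventually.of_forall (hptwise i))]
    rw [integral_add (integrable_const 1) ((hXint i).const_mul _),
      integral_const, integral_const_mul, hEX i]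
    simp
  have hp : ∀ i, (1 : ℝ) / 3 ≤ (ℙ (A i)).toReal := by
    intro i
    have h1 := hprob i
    have hfin : ℙ (A i) ≠ ⊤ := measure_ne_top _ _
    calc (1 : ℝ) / 3 = (ENNReal.ofReal (1 / 3)).toReal := by
          rw [ENNReal.toReal_ofReal]; norm_num
      _ ≤ (ℙ (A i)).toReal := ENNReal.toReal_mono hfin h1
  have hmgf_le : ∀ i, mgf (X i) ℙ t ≤ 3 / 4 := by
    intro i
    rw [hmgf i, het]
    linarith [hp i]
  -- Chernoff
  have hSint : Integrable (fun ω => Real.exp (t * (∑ i, X i) ω)) ℙ :=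
    hind.integrable_exp_mul_sum hmeas (fun i _ => hintexp i)
  have key := measure_le_le_exp_mul_mgf (X := ∑ i, X i) (μ := ℙ) a ht hSint
  have hsetEq : {ω | (∑ i, X i) ω ≤ a} = {ω | ∑ i, X i ω ≤ Real.log n} := by
    ext ω; simp [Finset.sum_apply, ha]
  rw [hsetEq, hind.mgf_sum hmeas] at key
  have hprod : ∏ i, mgf (X i) ℙ t ≤ (3 / 4 : ℝ) ^ m := by
    calc ∏ i, mgf (X i) ℙ t ≤ ∏ _i : Fin m, (3 / 4 : ℝ) :=
          Finset.prod_le_prod (fun i _ => mgf_nonneg) (fun i _ => hmgf_le i)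
      _ = (3 / 4 : ℝ) ^ m := by simp [div_pow]
  have hlog2 := Real.log_two_lt_d9
  have hlog34 : Real.log (3 / 4) ≤ -(1 / 4) := by
    have := Real.log_le_sub_one_of_pos (x := (3 / 4 : ℝ)) (by norm_num)
    linarith
  have h34exp : ((3 : ℝ) / 4) ^ m = Real.exp ((m : ℝ) * Real.log (3 / 4)) := by
    rw [Real.exp_nat_mul, Real.exp_log (by norm_num)]
  have hlog4 : Real.log 4 = 2 * Real.log 2 := by
    rw [show (4 : ℝ) = 2 ^ 2 by norm_num, Real.log_pow]; push_cast; ring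
  have hrealbound : Real.exp (-t * a) * ∏ i, mgf (X i) ℙ t ≤ (n : ℝ) ^ (-(9 : ℝ) / 8) := by
    have h1 : Real.exp (-t * a) * ∏ i, mgf (X i) ℙ t ≤
        Real.exp (a * Real.log 4) * Real.exp ((m : ℝ) * Real.log (3 / 4)) := by
      rw [htdef, neg_neg, ← h34exp]
      have : Real.log 4 * a = a * Real.log 4 := by ring
      rw [this]
      exact mul_le_mul_of_nonneg_left hprod (Real.exp_nonneg _)
    rw [← Real.exp_add] at h1
    have h2 : a * Real.log 4 + (m : ℝ) * Real.log (3 / 4) ≤ -(9 / 8) * a := by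
      have hm' : (12 : ℝ) * a ≤ (m : ℝ) := hm
      have hmn : (0 : ℝ) ≤ (m : ℝ) := Nat.cast_nonneg m
      nlinarith [hlog34, hlog2, ha0, hlog4]
    have h3 : (n : ℝ) ^ (-(9 : ℝ) / 8) = Real.exp (Real.log n * (-(9 : ℝ) / 8)) := by
      rw [Real.rpow_def_of_pos (by linarith)]
    rw [h3]
    refine h1.trans (Real.exp_le_exp.mpr ?_)
    calc a * Real.log 4 + (m : ℝ) * Real.log (3 / 4) ≤ -(9 / 8) * a := h2
      _ = Real.log n * (-(9 : ℝ) / 8) := by rw [← ha]; ring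
  have hbound : ℙ {ω | ∑ i, X i ω ≤ Real.log n} ≤ ENNReal.ofReal ((n : ℝ) ^ (-(9 : ℝ) / 8)) := by
    rw [ENNReal.le_ofReal_iff_toReal_le (measure_ne_top _ _)
      (Real.rpow_nonneg (by linarith) _)]
    exact key.trans hrealbound
  refine ⟨hbound, lt_of_le_of_lt hbound ?_⟩
  have hn0 : (0 : ℝ) < (n : ℝ) := by linarith
  have hinv : 1 / (n : ℝ≥0∞) = ENNReal.ofReal ((n : ℝ)⁻¹) := by
    rw [ENNReal.ofReal_inv_of_pos hn0, ENNReal.ofReal_natCast, one_div]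
  rw [hinv]
  rw [ENNReal.ofReal_lt_ofReal_iff (by positivity)]
  calc (n : ℝ) ^ (-(9 : ℝ) / 8) < (n : ℝ) ^ (-1 : ℝ) := by
        rw [Real.rpow_lt_rpow_left_iff (by linarith)]
        norm_num
    _ = (n : ℝ)⁻¹ := Real.rpow_neg_one _
end

section
/- Let b ≥ 0 be an integer and let X, Y : {1,…,b} → {0,1} be two Boolean vectors. Define a simple graph H on the vertex set {s, t} ∪ {u_1,…,u_b} ∪ {v_1,…,v_b} (all 2b+2 vertices distinct) whose edge set consists of: the edge {s,t}; the edges {u_i, v_i} for all 1 ≤ i ≤ b; the edges {s, u_i} exactly for those i with X(i) = 0; and the edges {v_i, t} exactly for those i with Y(i) = 0. Then H is connected if and only if X and Y are disjoint, i.e., there is no index i with X(i) = Y(i) = 1. -/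
/-- Vertices of the lower-bound graph: two special vertices `s`, `t`, and
vertices `u 1, …, u b` and `v 1, …, v b`. -/
inductive LBVertex (b : ℕ) where
  | s : LBVertex b
  | t : LBVertex b
  | u : Fin b → LBVertex b
  | v : Fin b → LBVertex b
  deriving DecidableEq

/-- The subgraph `H` from the set-disjointness reduction: it has the edge
`{s,t}`, all edges `{uᵢ, vᵢ}`, the edges `{s, uᵢ}` exactly for those `i` with
`X i = 0` (i.e. `X i = false`), and the edges `{vᵢ, t}` exactly for those `i`
with `Y i = 0` (i.e. `Y i = false`). -/
def LBGraph (b : ℕ) (X Y : Fin b → Bool) : SimpleGraph (LBVertex b) :=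
  SimpleGraph.fromRel (fun a c =>
    (a = .s ∧ c = .t) ∨
    (∃ i, a = .u i ∧ c = .v i) ∨
    (∃ i, a = .s ∧ c = .u i ∧ X i = false) ∨
    (∃ i, a = .v i ∧ c = .t ∧ Y i = false))

lemma LBGraph_adj {b : ℕ} {X Y : Fin b → Bool} {a c : LBVertex b} :
    (LBGraph b X Y).Adj a c ↔ a ≠ c ∧
      (((a = .s ∧ c = .t) ∨
        (∃ i, a = .u i ∧ c = .v i) ∨
        (∃ i, a = .s ∧ c = .u i ∧ X i = false) ∨
        (∃ i, a = .v i ∧ c = .t ∧ Y i = false)) ∨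
       ((c = .s ∧ a = .t) ∨
        (∃ i, c = .u i ∧ a = .v i) ∨
        (∃ i, c = .s ∧ a = .u i ∧ X i = false) ∨
        (∃ i, c = .v i ∧ a = .t ∧ Y i = false))) :=
  SimpleGraph.fromRel_adj _ _ _

/-- `H` is connected if and only if the Boolean vectors `X` and `Y` are
disjoint, i.e. there is no index `i` with `X i = Y i = 1`. -/
theorem LBGraph_connected_iff_disjoint (b : ℕ) (X Y : Fin b → Bool) :
    (LBGraph b X Y).Connected ↔ ¬ ∃ i, X i = true ∧ Y i = true := by
  constructor
  · rintro hconn ⟨i, hX, hY⟩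
    have hreach : (LBGraph b X Y).Reachable (.u i) .s := hconn.preconnected _ _
    have key : ∀ a c : LBVertex b, (LBGraph b X Y).Adj a c →
        (a = .u i ∨ a = .v i) → (c = .u i ∨ c = .v i) := by
      rintro a c hadj hac
      rw [LBGraph_adj] at hadj
      obtain ⟨-, h⟩ := hadj
      rcases hac with rfl | rfl <;>
        rcases h with (⟨h1, h2⟩ | ⟨j, h1, h2⟩ | ⟨j, h1, h2, h3⟩ | ⟨j, h1, h2, h3⟩) |
          (⟨h1, h2⟩ | ⟨j, h1, h2⟩ | ⟨j, h1, h2, h3⟩ | ⟨j, h1, h2, h3⟩) <;>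
        simp_all
    obtain ⟨w⟩ := hreach
    have : ∀ (x y : LBVertex b) (w : (LBGraph b X Y).Walk x y),
        (x = .u i ∨ x = .v i) → (y = .u i ∨ y = .v i) := by
      intro x y w
      induction w with
      | nil => exact fun h => h
      | cons h _ ih => exact fun hx => ih (key _ _ h hx)
    have := this _ _ w (Or.inl rfl)
    simp at this
  · intro hdisj
    have hst : (LBGraph b X Y).Adj .s .t := by
      rw [LBGraph_adj]; exact ⟨by simp, Or.inl (Or.inl ⟨rfl, rfl⟩)⟩
    have huv : ∀ i, (LBGraph b X Y).Adj (.u i) (.v i) := fun i => by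
      rw [LBGraph_adj]; exact ⟨by simp, Or.inl (Or.inr (Or.inl ⟨i, rfl, rfl⟩))⟩
    have hreach : ∀ w : LBVertex b, (LBGraph b X Y).Reachable .s w := by
      intro w
      have hu : ∀ i : Fin b, (LBGraph b X Y).Reachable .s (.u i) := by
        intro i
        rcases hXi : X i with _ | _
        · exact SimpleGraph.Adj.reachable (by
            rw [LBGraph_adj]
            exact ⟨by simp, Or.inl (Or.inr (Or.inr (Or.inl ⟨i, rfl, rfl, hXi⟩)))⟩)
        · have hYi : Y i = false := by
            by_contra h
            exact hdisj ⟨i, hXi, by simpa using h⟩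
          have hvt : (LBGraph b X Y).Adj (.v i) .t := by
            rw [LBGraph_adj]
            exact ⟨by simp, Or.inl (Or.inr (Or.inr (Or.inr ⟨i, rfl, rfl, hYi⟩)))⟩
          exact (hst.reachable.trans hvt.symm.reachable).trans (huv i).symm.reachable
      cases w with
      | s => exact SimpleGraph.Reachable.refl _
      | t => exact hst.reachable
      | u i => exact hu i
      | v i => exact (hu i).trans (huv i).reachable
    have : Nonempty (LBVertex b) := ⟨.s⟩
    exact SimpleGraph.Connected.mk fun a c => (hreach a).symm.trans (hreach c)
end
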